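/- arXiv:1906.04674 — 6 statements merged into one kernel-verified Lean document; each statement's English description precedes it below -/
import Mathlib

section
/- Let R be a commutative ring with 1 and let x = (x^1,...,x^{k+1}) and y = (y^1,...,y^{k+1}) be tuples of vectors in R^2 such that x^i · (x^j)^⊥ = y^i · (y^j)^⊥ for all pairs of indices i,j, where (a,b)^⊥ = (-b,a). Suppose there exist indices i,j such that x^i · (x^j)^⊥ is a unit in R. Then there exists a unique g ∈ SL_2(R) such that y^i = g x^i for every i. -/
/-- If two `(k+1)`-tuples of vectors in `R²` determine the same pairwise "areas"
`xⁱ · (xʲ)^⊥` and some such area is a unit (the tuple is good), then there is a unique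
`g ∈ SL₂(R)` mapping `xⁱ` to `yⁱ` for every `i`. -/
theorem good_equiv_unique_SL2 (R : Type*) [CommRing R] (k : ℕ)
    (x y : Fin (k + 1) → Fin 2 → R)
    (heq : ∀ i j, x i 0 * x j 1 - x i 1 * x j 0 = y i 0 * y j 1 - y i 1 * y j 0)
    (hgood : ∃ i j, IsUnit (x i 0 * x j 1 - x i 1 * x j 0)) :
    ∃! g : Matrix.SpecialLinearGroup (Fin 2) R,
      ∀ i, y i = (g : Matrix (Fin 2) (Fin 2) R).mulVec (x i) := by
  obtain ⟨i, j, hu⟩ := hgood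
  obtain ⟨u, hu'⟩ := hu
  set r : R := ((u⁻¹ : Rˣ) : R) with hrdef
  have hr : r * (x i 0 * x j 1 - x i 1 * x j 0) = 1 := by
    rw [← hu']; exact u.inv_mul
  set G : Matrix (Fin 2) (Fin 2) R :=
    !![(y i 0 * x j 1 - y j 0 * x i 1) * r, (y j 0 * x i 0 - y i 0 * x j 0) * r;
       (y i 1 * x j 1 - y j 1 * x i 1) * r, (y j 1 * x i 0 - y i 1 * x j 0) * r] with hG
  have hdet : G.det = 1 := by
    rw [hG, Matrix.det_fin_two_of]
    linear_combination (r * (x i 0 * x j 1 - x i 1 * x j 0) + 1) * hr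
      - ((x i 0 * x j 1 - x i 1 * x j 0) * r ^ 2) * (heq i j)
  refine ⟨⟨G, hdet⟩, ?_, ?_⟩
  · intro m
    funext c
    have hx : ((⟨G, hdet⟩ : Matrix.SpecialLinearGroup (Fin 2) R) :
        Matrix (Fin 2) (Fin 2) R) = G := rfl
    rw [hx]
    fin_cases c <;>
      simp only [hG, Matrix.mulVec, dotProduct, Fin.sum_univ_two,
        Matrix.of_apply, Matrix.cons_val', Matrix.cons_val_zero, Matrix.cons_val_one,
        Matrix.head_cons, Matrix.head_fin_const, Matrix.empty_val',
        Matrix.cons_val_fin_one, Fin.mk_zero, Fin.mk_one, Fin.isValue]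
    · linear_combination (-(y m 0)) * hr + (r * y m 0) * (heq i j)
        - (r * y i 0) * (heq m j) - (r * y j 0) * (heq i m)
    · linear_combination (-(y m 1)) * hr + (r * y m 1) * (heq i j)
        - (r * y i 1) * (heq m j) - (r * y j 1) * (heq i m)
  · intro g hg
    ext a b
    have h1 := congrFun (hg i)
    have h2 := congrFun (hg j)
    simp only [Matrix.mulVec, dotProduct, Fin.sum_univ_two] at h1 h2
    have e1 := (h1 a).symm
    have e2 := (h2 a).symm
    fin_cases a <;> fin_cases b <;>
      simp only [hG, Matrix.SpecialLinearGroup.coe_mk, Matrix.of_apply,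
        Matrix.cons_val', Matrix.cons_val_zero, Matrix.cons_val_one,
        Matrix.head_cons, Matrix.empty_val', Matrix.cons_val_fin_one,
        Fin.mk_zero, Fin.mk_one, Fin.isValue, Matrix.vecHead, Matrix.vecTail] at e1 e2 ⊢
    · linear_combination (-((g : Matrix (Fin 2) (Fin 2) R) 0 0)) * hr
        + (r * x j 1) * e1 - (r * x i 1) * e2
    · linear_combination (-((g : Matrix (Fin 2) (Fin 2) R) 0 1)) * hr
        - (r * x j 0) * e1 + (r * x i 0) * e2
    · linear_combination (-((g : Matrix (Fin 2) (Fin 2) R) 1 0)) * hr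
        + (r * x j 1) * e1 - (r * x i 1) * e2
    · linear_combination (-((g : Matrix (Fin 2) (Fin 2) R) 1 1)) * hr
        - (r * x j 0) * e1 + (r * x i 0) * e2
end

section
/- Let p be an odd prime and ℓ ≥ 1. The number of (k+1)-tuples x ∈ ((Z/p^ℓ Z)^2)^{k+1} such that x^i · (x^j)^⊥ is a non-unit for all pairs i,j is at most C · p^{(2ℓ-1)(k+1)+1} for an absolute constant C. -/
lemma aux_nonunit {p : ℕ} (hp : p.Prime) (m : ℕ) (a : ZMod (p ^ (m + 1))) :
    ¬ IsUnit a ↔ p ∣ a.val := by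
  haveI : Fact p.Prime := ⟨hp⟩
  haveI : NeZero (p ^ (m + 1)) := ⟨pow_ne_zero _ hp.ne_zero⟩
  conv_lhs => rw [← ZMod.natCast_rightInverse a]
  rw [ZMod.isUnit_iff_coprime, Nat.coprime_pow_right_iff (Nat.succ_pos m),
    Nat.coprime_comm, hp.coprime_iff_not_dvd, not_not]

lemma aux_cast_val {p : ℕ} (hp : p.Prime) (m : ℕ) (a : ZMod (p ^ (m + 1))) :
    (ZMod.castHom (dvd_pow_self p (Nat.succ_ne_zero m)) (ZMod p) a).val = a.val % p := by
  haveI : Fact p.Prime := ⟨hp⟩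
  haveI : NeZero (p ^ (m + 1)) := ⟨pow_ne_zero _ hp.ne_zero⟩
  rw [ZMod.castHom_apply, ← ZMod.natCast_val, ZMod.val_natCast]

lemma aux_cast_zero {p : ℕ} (hp : p.Prime) (m : ℕ) (a : ZMod (p ^ (m + 1))) :
    ZMod.castHom (dvd_pow_self p (Nat.succ_ne_zero m)) (ZMod p) a = 0 ↔ p ∣ a.val := by
  haveI : Fact p.Prime := ⟨hp⟩
  haveI : NeZero (p ^ (m + 1)) := ⟨pow_ne_zero _ hp.ne_zero⟩
  rw [ZMod.castHom_apply, ← ZMod.natCast_val, ZMod.natCast_eq_zero_iff]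

lemma aux_lines {p : ℕ} (hp : p.Prime) (k : ℕ) :
    Nat.card {y : Fin (k + 1) → Fin 2 → ZMod p //
        ∀ i j, y i 0 * y j 1 - y i 1 * y j 0 = 0} ≤ (p + 1) * p ^ (k + 1) := by
  haveI : Fact p.Prime := ⟨hp⟩
  set w : Option (ZMod p) → Fin 2 → ZMod p :=
    fun o => o.elim ![0, 1] (fun t => ![1, t]) with hw
  have hsurj : Function.Surjective
      (fun z : Option (ZMod p) × (Fin (k + 1) → ZMod p) =>
        (⟨fun i j => z.2 i * w z.1 j, by intro i j; ring⟩ :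
          {y : Fin (k + 1) → Fin 2 → ZMod p //
            ∀ i j, y i 0 * y j 1 - y i 1 * y j 0 = 0})) := by
    rintro ⟨y, hy⟩
    by_cases h : ∀ i, y i 0 = 0
    · refine ⟨(none, fun i => y i 1), ?_⟩
      apply Subtype.ext
      funext i j
      fin_cases j <;> simp [hw, h i]
    · push_neg at h
      obtain ⟨i0, hi0⟩ := h
      refine ⟨(some (y i0 1 * (y i0 0)⁻¹), fun i => y i 0), ?_⟩
      apply Subtype.ext
      funext i j
      have hij := hy i i0
      fin_cases j
      · simp [hw]
      · show y i 0 * (w (some (y i0 1 * (y i0 0)⁻¹)) 1) = y i 1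
        simp only [hw, Option.elim, Matrix.cons_val_one, Matrix.head_cons]
        have h2 : y i 1 * y i0 0 = y i 0 * y i0 1 := by linear_combination -hij
        calc y i 0 * (y i0 1 * (y i0 0)⁻¹) = (y i 1 * y i0 0) * (y i0 0)⁻¹ := by
              rw [h2]; ring
          _ = y i 1 := by rw [mul_assoc, mul_inv_cancel₀ hi0, mul_one]
  calc Nat.card {y : Fin (k + 1) → Fin 2 → ZMod p //
        ∀ i j, y i 0 * y j 1 - y i 1 * y j 0 = 0}
      ≤ Nat.card (Option (ZMod p) × (Fin (k + 1) → ZMod p)) :=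
        Nat.card_le_card_of_surjective _ hsurj
    _ = (p + 1) * p ^ (k + 1) := by
        simp [Nat.card_eq_fintype_card, ZMod.card, Nat.add_comm]

/-- There is an absolute constant `C` such that, for every odd prime `p` and `ℓ ≥ 1`,
the number of `(k+1)`-tuples in `((ℤ/p^ℓℤ)²)^{k+1}` all of whose pairwise "areas"
`xⁱ · (xʲ)^⊥` are non-units is at most `C * p^{(2ℓ-1)(k+1)+1}`. -/
theorem count_bad_tuples_zmod :
    ∃ C : ℕ, 0 < C ∧ ∀ (p ℓ k : ℕ), p.Prime → Odd p → 1 ≤ ℓ →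
      Nat.card {x : Fin (k + 1) → Fin 2 → ZMod (p ^ ℓ) //
          ∀ i j, ¬ IsUnit (x i 0 * x j 1 - x i 1 * x j 0)} ≤
        C * p ^ ((2 * ℓ - 1) * (k + 1) + 1) := by
  refine ⟨2, by norm_num, ?_⟩
  intro p ℓ k hp _hodd hℓ
  haveI : Fact p.Prime := ⟨hp⟩
  obtain ⟨m, rfl⟩ : ∃ m, ℓ = m + 1 := ⟨ℓ - 1, by omega⟩
  haveI : NeZero (p ^ (m + 1)) := ⟨pow_ne_zero _ hp.ne_zero⟩
  set φ := ZMod.castHom (dvd_pow_self p (Nat.succ_ne_zero m)) (ZMod p) with hφ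
  have hp1 : p + 1 ≤ 2 * p := by have := hp.two_le; omega
  have e0 : 2 * (m + 1) - 1 = 2 * m + 1 := by omega
  have e1 : (2 * (m + 1) - 1) * (k + 1) + 1 = 1 + (k + 1) + 2 * m * (k + 1) := by
    rw [e0]; ring
  -- the injection into (reduced tuple, quotient digits)
  have hdiv : ∀ a : ZMod (p ^ (m + 1)), a.val / p < p ^ m := by
    intro a
    rw [Nat.div_lt_iff_lt_mul hp.pos, ← pow_succ]
    exact ZMod.val_lt a
  have step1 : Nat.card {x : Fin (k + 1) → Fin 2 → ZMod (p ^ (m + 1)) //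
          ∀ i j, ¬ IsUnit (x i 0 * x j 1 - x i 1 * x j 0)} ≤
      Nat.card ({y : Fin (k + 1) → Fin 2 → ZMod p //
          ∀ i j, y i 0 * y j 1 - y i 1 * y j 0 = 0} ×
        (Fin (k + 1) → Fin 2 → Fin (p ^ m))) := by
    apply Nat.card_le_card_of_injective
      (f := fun x => (⟨fun i j => φ (x.1 i j), by
          intro i j
          have h1 := (aux_nonunit hp m _).mp (x.2 i j)
          have h2 := (aux_cast_zero hp m _).mpr h1
          simpa [hφ, map_sub, map_mul] using h2⟩,
        fun i j => ⟨(x.1 i j).val / p, hdiv _⟩))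
    rintro ⟨x, hx⟩ ⟨x', hx'⟩ h
    simp only [Prod.mk.injEq, Subtype.mk.injEq] at h
    obtain ⟨h1, h2⟩ := h
    apply Subtype.ext
    funext i j
    have e1 : φ (x i j) = φ (x' i j) := congrFun (congrFun h1 i) j
    have e2 : (x i j).val / p = (x' i j).val / p := by
      have := congrFun (congrFun h2 i) j
      exact congrArg Fin.val this
    have e3 : (x i j).val % p = (x' i j).val % p := by
      have := congrArg ZMod.val e1
      rwa [aux_cast_val hp, aux_cast_val hp] at this
    have e4 : (x i j).val = (x' i j).val := by
      have d1 := Nat.div_add_mod (x i j).val p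
      have d2 := Nat.div_add_mod (x' i j).val p
      rw [e2] at d1
      omega
    calc x i j = (((x i j).val : ℕ) : ZMod (p ^ (m + 1))) :=
          (ZMod.natCast_rightInverse _).symm
      _ = (((x' i j).val : ℕ) : ZMod (p ^ (m + 1))) := by rw [e4]
      _ = x' i j := ZMod.natCast_rightInverse _
  have step2 : Nat.card ({y : Fin (k + 1) → Fin 2 → ZMod p //
          ∀ i j, y i 0 * y j 1 - y i 1 * y j 0 = 0} ×
        (Fin (k + 1) → Fin 2 → Fin (p ^ m))) ≤
      ((p + 1) * p ^ (k + 1)) * p ^ (2 * m * (k + 1)) := by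
    rw [Nat.card_prod]
    have hc : Nat.card (Fin (k + 1) → Fin 2 → Fin (p ^ m)) = p ^ (2 * m * (k + 1)) := by
      simp only [Nat.card_eq_fintype_card, Fintype.card_fun, Fintype.card_fin]
      rw [← pow_mul, ← pow_mul]
      ring_nf
    rw [hc]
    exact Nat.mul_le_mul (aux_lines hp k) le_rfl
  have step3 : (p + 1) * p ^ (k + 1) * p ^ (2 * m * (k + 1)) ≤
      2 * p ^ ((2 * (m + 1) - 1) * (k + 1) + 1) := by
    rw [e1, pow_add, pow_add, pow_one]
    calc (p + 1) * p ^ (k + 1) * p ^ (2 * m * (k + 1))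
        ≤ 2 * p * p ^ (k + 1) * p ^ (2 * m * (k + 1)) := by gcongr
      _ = 2 * (p ^ (1 + (k + 1)) * p ^ (2 * m * (k + 1))) := by
          rw [pow_add, pow_one]; ring
  exact le_trans (le_trans step1 step2) step3
end

section
/- Let S be a finite nonempty set and F : S → ℝ_{≥0}. Let A = (1/|S|) Σ_{x∈S} F(x), M = max_{x∈S} F(x), and suppose Σ_{x∈S} F(x)^2 = A^2|S| + R. Then for every k ≥ 1 there is a constant c_k depending only on k (e.g. c_k = 2^{k^2}) such that Σ_{x∈S} F(x)^{k+1} ≤ c_k (M^{k-1} R + A^{k+1} |S|). -/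
/-!
Split each value according to whether `F x ≤ 2A`. Where it is, `F x ^ (k+1) ≤ (2A) ^ (k+1)`.
Where it is not, `F x` is at most twice its deviation `F x - A`, so
`F x ^ (k+1) = F x ^ (k-1) F x ^ 2 ≤ 4 M ^ (k-1) (F x - A) ^ 2`, and the deviations sum to `R`.
Hence one may take `c_k = 2 ^ (k+1)`.
-/

open Finset

lemma pow_add_two_le_deviation_add {a m A : ℝ} (n : ℕ) (ha : 0 ≤ a) (ham : a ≤ m) (hA : 0 ≤ A) :
    a ^ (n + 2) ≤ 4 * m ^ n * (a - A) ^ 2 + (2 * A) ^ (n + 2) := by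
  have hm : 0 ≤ m := ha.trans ham
  rcases le_or_gt a (2 * A) with hsmall | hlarge
  · have : a ^ (n + 2) ≤ (2 * A) ^ (n + 2) := pow_le_pow_left₀ ha hsmall _
    have : 0 ≤ 4 * m ^ n * (a - A) ^ 2 := by positivity
    linarith
  · have hsq : a ^ 2 ≤ 4 * (a - A) ^ 2 := by nlinarith
    calc a ^ (n + 2) = a ^ n * a ^ 2 := pow_add a n 2
      _ ≤ m ^ n * (4 * (a - A) ^ 2) :=
          mul_le_mul (pow_le_pow_left₀ ha ham n) hsq (sq_nonneg a) (pow_nonneg hm n)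
      _ ≤ 4 * m ^ n * (a - A) ^ 2 + (2 * A) ^ (n + 2) := by
          have : 0 ≤ (2 * A) ^ (n + 2) := by positivity
          linarith

lemma sum_sq_sub_eq_of_sum_eq {α : Type*} (S : Finset α) (F : α → ℝ) {A : ℝ}
    (hA : ∑ x ∈ S, F x = A * #S) :
    ∑ x ∈ S, (F x - A) ^ 2 = ∑ x ∈ S, F x ^ 2 - A ^ 2 * #S := by
  have hexpand : ∑ x ∈ S, (F x - A) ^ 2
      = ∑ x ∈ S, F x ^ 2 - 2 * A * ∑ x ∈ S, F x + ∑ _x ∈ S, A ^ 2 := by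
    rw [mul_sum, ← sum_sub_distrib, ← sum_add_distrib]
    exact sum_congr rfl fun x _ => by ring
  rw [hexpand, hA, sum_const, nsmul_eq_mul]
  ring

lemma sum_pow_add_two_le {α : Type*} (S : Finset α) (F : α → ℝ) {A M : ℝ} (n : ℕ)
    (hF : ∀ x ∈ S, 0 ≤ F x) (hM : ∀ x ∈ S, F x ≤ M) (hA : 0 ≤ A) :
    ∑ x ∈ S, F x ^ (n + 2) ≤ 4 * M ^ n * ∑ x ∈ S, (F x - A) ^ 2 + (2 * A) ^ (n + 2) * #S := by
  calc ∑ x ∈ S, F x ^ (n + 2)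
      ≤ ∑ x ∈ S, (4 * M ^ n * (F x - A) ^ 2 + (2 * A) ^ (n + 2)) :=
        sum_le_sum fun x hx => pow_add_two_le_deviation_add n (hF x hx) (hM x hx) hA
    _ = 4 * M ^ n * ∑ x ∈ S, (F x - A) ^ 2 + (2 * A) ^ (n + 2) * #S := by
        rw [sum_add_distrib, mul_sum, sum_const, nsmul_eq_mul, mul_comm (#S : ℝ)]

/-- Lifting an `L²` estimate to an `L^{k+1}` estimate: if `A` is the average of a
nonnegative function `F` on a finite nonempty set `S`, `M` its maximum, and
`∑ F(x)² = A²|S| + R`, then `∑ F(x)^{k+1} ≤ c_k (M^{k-1} R + A^{k+1} |S|)` for a constant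
`c_k` depending only on `k`. -/
theorem lift_L2_to_Lk (k : ℕ) (hk : 1 ≤ k) :
    ∃ c : ℝ, 0 < c ∧
      ∀ (α : Type) (S : Finset α) (_hS : S.Nonempty) (F : α → ℝ),
        (∀ x ∈ S, 0 ≤ F x) →
        ∀ (A M R : ℝ),
          A = (∑ x ∈ S, F x) / S.card →
          (∀ x ∈ S, F x ≤ M) → (∃ x ∈ S, F x = M) →
          (∑ x ∈ S, F x ^ 2) = A ^ 2 * S.card + R →
          (∑ x ∈ S, F x ^ (k + 1)) ≤ c * (M ^ (k - 1) * R + A ^ (k + 1) * S.card) := by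
  refine ⟨2 ^ (k + 1), by positivity, ?_⟩
  intro α S hS F hF A M R hA hM ⟨x₀, hx₀, hx₀M⟩ hR
  obtain ⟨n, rfl⟩ : ∃ n, k = n + 1 := ⟨k - 1, by omega⟩
  have hcard : (0 : ℝ) < #S := by exact_mod_cast hS.card_pos
  have hsum : ∑ x ∈ S, F x = A * #S := by rw [hA]; field_simp
  have hA0 : 0 ≤ A := hA ▸ div_nonneg (sum_nonneg hF) hcard.le
  have hM0 : 0 ≤ M := hx₀M ▸ hF x₀ hx₀
  have hR_eq : ∑ x ∈ S, (F x - A) ^ 2 = R := by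
    rw [sum_sq_sub_eq_of_sum_eq S F hsum, hR]; ring
  have hR0 : 0 ≤ R := hR_eq ▸ sum_nonneg fun x _ => sq_nonneg _
  have h4 : (4 : ℝ) ≤ 2 ^ (n + 2) := by
    calc (4 : ℝ) = 2 ^ 2 := by norm_num
      _ ≤ 2 ^ (n + 2) := pow_le_pow_right₀ (by norm_num) (by omega)
  have hMR : 0 ≤ M ^ n * R := by positivity
  calc ∑ x ∈ S, F x ^ (n + 2)
      ≤ 4 * M ^ n * R + 2 ^ (n + 2) * A ^ (n + 2) * #S := by
        simpa only [hR_eq, mul_pow] using sum_pow_add_two_le S F n hF hM hA0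
    _ ≤ 2 ^ (n + 2) * (M ^ n * R + A ^ (n + 2) * #S) := by
        nlinarith [mul_le_mul_of_nonneg_right h4 hMR]
end

section
/- Let R be a finite commutative ring, E ⊆ R^2, and for g ∈ SL_2(R) define f(g) = |{x ∈ E : g·x ∈ E}|. Then the number of pairs (x, y) of good (k+1)-tuples in E^{k+1} × E^{k+1} with x^i·(x^j)^⊥ = y^i·(y^j)^⊥ for all i,j is at most Σ_{g ∈ SL_2(R)} f(g)^{k+1}. -/
lemma exists_sl2_aux {R : Type*} [CommRing R] {n : ℕ} (x y : Fin n → Fin 2 → R) (i j : Fin n)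
    (hD : IsUnit (x i 0 * x j 1 - x i 1 * x j 0))
    (hw : ∀ a b, x a 0 * x b 1 - x a 1 * x b 0 = y a 0 * y b 1 - y a 1 * y b 0) :
    ∃ g : Matrix.SpecialLinearGroup (Fin 2) R,
      ∀ m, (g : Matrix (Fin 2) (Fin 2) R).mulVec (x m) = y m := by
  obtain ⟨u, hu⟩ := hD
  set d : R := ↑u⁻¹ with hd_def
  have hd : d * (x i 0 * x j 1 - x i 1 * x j 0) = 1 := by
    rw [← hu]; exact u.inv_mul
  refine ⟨⟨Matrix.of ![![d * (y i 0 * x j 1 - y j 0 * x i 1), d * (y j 0 * x i 0 - y i 0 * x j 0)],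
      ![d * (y i 1 * x j 1 - y j 1 * x i 1), d * (y j 1 * x i 0 - y i 1 * x j 0)]], ?_⟩, ?_⟩
  · rw [Matrix.det_fin_two]
    simp only [Matrix.of_apply, Matrix.cons_val', Matrix.cons_val_zero, Matrix.cons_val_one,
      Matrix.head_cons, Matrix.empty_val', Matrix.cons_val_fin_one, Matrix.head_fin_const]
    linear_combination (d * (y i 0 * y j 1 - y i 1 * y j 0)) * hd + hd - d * hw i j
  · intro m
    funext p
    fin_cases p <;>
      simp [Matrix.mulVec, dotProduct, Fin.sum_univ_two]
    · linear_combination d * (y i 0) * hw m j + d * (y j 0) * hw i m + (y m 0) * hd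
        - d * (y m 0) * hw i j
    · linear_combination d * (y i 1) * hw m j + d * (y j 1) * hw i m + (y m 1) * hd
        - d * (y m 1) * hw i j

/-- For a finite commutative ring `R` and `E ⊆ R²`, with `f(g) = |{v ∈ E : g v ∈ E}|`, the
number of pairs of good equivalent `(k+1)`-tuples from `E` is at most
`∑_{g ∈ SL₂(R)} f(g)^{k+1}`. -/
theorem count_equivalent_good_pairs (R : Type*) [CommRing R] [Fintype R] [DecidableEq R]
    (k : ℕ) (E : Finset (Fin 2 → R)) :
    Nat.card {xy : (Fin (k + 1) → Fin 2 → R) × (Fin (k + 1) → Fin 2 → R) //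
        (∀ i, xy.1 i ∈ E) ∧ (∀ i, xy.2 i ∈ E) ∧
        (∃ i j, IsUnit (xy.1 i 0 * xy.1 j 1 - xy.1 i 1 * xy.1 j 0)) ∧
        (∃ i j, IsUnit (xy.2 i 0 * xy.2 j 1 - xy.2 i 1 * xy.2 j 0)) ∧
        ∀ i j, xy.1 i 0 * xy.1 j 1 - xy.1 i 1 * xy.1 j 0 =
          xy.2 i 0 * xy.2 j 1 - xy.2 i 1 * xy.2 j 0} ≤
      ∑ g : Matrix.SpecialLinearGroup (Fin 2) R,
        ((E.filter fun v => (g : Matrix (Fin 2) (Fin 2) R).mulVec v ∈ E).card) ^ (k + 1) := by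
  classical
  set S := {xy : (Fin (k + 1) → Fin 2 → R) × (Fin (k + 1) → Fin 2 → R) //
        (∀ i, xy.1 i ∈ E) ∧ (∀ i, xy.2 i ∈ E) ∧
        (∃ i j, IsUnit (xy.1 i 0 * xy.1 j 1 - xy.1 i 1 * xy.1 j 0)) ∧
        (∃ i j, IsUnit (xy.2 i 0 * xy.2 j 1 - xy.2 i 1 * xy.2 j 0)) ∧
        ∀ i j, xy.1 i 0 * xy.1 j 1 - xy.1 i 1 * xy.1 j 0 =
          xy.2 i 0 * xy.2 j 1 - xy.2 i 1 * xy.2 j 0} with hS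
  have key : ∀ s : S, ∃ g : Matrix.SpecialLinearGroup (Fin 2) R,
      ∀ m, (g : Matrix (Fin 2) (Fin 2) R).mulVec (s.1.1 m) = s.1.2 m := by
    rintro ⟨⟨x, y⟩, hx, hy, ⟨i, j, hD⟩, -, hw⟩
    exact exists_sl2_aux x y i j hD hw
  choose g hg using key
  set T := Σ g : Matrix.SpecialLinearGroup (Fin 2) R,
      (Fin (k + 1) → {v // v ∈ E.filter fun v => (g : Matrix (Fin 2) (Fin 2) R).mulVec v ∈ E})
    with hT
  have hmem : ∀ (s : S) (m : Fin (k + 1)),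
      s.1.1 m ∈ E.filter fun v => ((g s : Matrix (Fin 2) (Fin 2) R)).mulVec v ∈ E := by
    intro s m
    refine Finset.mem_filter.mpr ⟨s.2.1 m, ?_⟩
    rw [hg s m]
    exact s.2.2.1 m
  set F : S → T := fun s => ⟨g s, fun m => ⟨s.1.1 m, hmem s m⟩⟩ with hF
  have hinj : Function.Injective F := by
    intro s t h
    have h1 : g s = g t := congrArg Sigma.fst h
    have h2 : ∀ m, s.1.1 m = t.1.1 m := fun m =>
      congrArg (fun p : T => (p.2 m : Fin 2 → R)) h
    have hx : s.1.1 = t.1.1 := funext h2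
    have hy : s.1.2 = t.1.2 := by
      funext m
      rw [← hg s m, ← hg t m, hx, h1]
    exact Subtype.ext (Prod.ext hx hy)
  calc Nat.card S ≤ Nat.card T := Nat.card_le_card_of_injective F hinj
    _ = _ := by
        simp only [hT, Nat.card_eq_fintype_card, Fintype.card_sigma, Fintype.card_fun,
          Fintype.card_coe, Fintype.card_fin]
end

section
/- Let q be an odd prime power, k ≥ 1, and E ⊆ F_q^2 a union of n circles {x : x_1^2 + x_2^2 = r} of distinct nonzero radii r. Then every (k+1)-tuple in E^{k+1} is equivalent (all pairwise values x^i·(x^j)^⊥ preserved) to at least |O_2(F_q)| ≥ q − 1 other tuples in E^{k+1}, and hence the number of equivalence classes of (k+1)-tuples from E is at most |E|^{k+1}/(q−1). -/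
/-- Sharpness example over finite fields: if `E ⊆ F_q²` is a union of circles of distinct
nonzero radii, then every `(k+1)`-tuple from `E` is equivalent to at least `q - 1` tuples
from `E`, and consequently the number of equivalence classes of `(k+1)`-tuples from `E`
is at most `|E|^{k+1} / (q-1)`. -/
theorem sharpness_circles_finite_field (F : Type*) [Field F] [Fintype F] [DecidableEq F]
    (q p m : ℕ) (hp : p.Prime) (hodd : Odd p) (hm : 1 ≤ m) (hq : q = p ^ m)
    (hcard : Fintype.card F = q) (k n : ℕ) (hk : 1 ≤ k)
    (r : Fin n → F) (hr : Function.Injective r) (hr0 : ∀ i, r i ≠ 0)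
    (E : Finset (Fin 2 → F))
    (hE : ∀ v : Fin 2 → F, v ∈ E ↔ ∃ i, v 0 ^ 2 + v 1 ^ 2 = r i) :
    (∀ x : Fin (k + 1) → Fin 2 → F, (∀ i, x i ∈ E) →
        q - 1 ≤ Nat.card {y : Fin (k + 1) → Fin 2 → F // (∀ i, y i ∈ E) ∧
          ∀ i j, y i 0 * y j 1 - y i 1 * y j 0 = x i 0 * x j 1 - x i 1 * x j 0}) ∧
      Nat.card {f : Fin (k + 1) → Fin (k + 1) → F //
          ∃ x : Fin (k + 1) → Fin 2 → F, (∀ i, x i ∈ E) ∧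
            ∀ i j, x i 0 * x j 1 - x i 1 * x j 0 = f i j} * (q - 1) ≤
        E.card ^ (k + 1) := by
  classical
  -- basic numerology
  have hp2 : p ≠ 2 := by
    rintro rfl
    exact (Nat.not_odd_iff_even.mpr even_two) hodd
  have hp3 : 3 ≤ p := by
    have := hp.two_le
    omega
  have hq3 : 3 ≤ q := by
    have : p ≤ p ^ m := Nat.le_self_pow (by omega) p
    omega
  -- characteristic is odd, so 2 ≠ 0 in F
  have h2 : (2 : F) ≠ 0 := by
    refine Ring.two_ne_zero ?_
    intro hch
    have hev := FiniteField.even_card_iff_char_two.mp hch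
    rw [hcard, hq] at hev
    have hoddq := Nat.odd_iff.mp (hodd.pow (n := m))
    omega
  -- the set of `t` with `t^2 + 1 = 0` has at most 2 elements
  have hB2 : (Finset.univ.filter (fun t : F => t ^ 2 + 1 = 0)).card ≤ 2 := by
    by_cases hB : (Finset.univ.filter (fun t : F => t ^ 2 + 1 = 0)).Nonempty
    · obtain ⟨c, hc⟩ := hB
      have hc' : c ^ 2 + 1 = 0 := (Finset.mem_filter.mp hc).2
      have hsub : (Finset.univ.filter (fun t : F => t ^ 2 + 1 = 0)) ⊆ {c, -c} := by
        intro t ht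
        have ht' : t ^ 2 + 1 = 0 := (Finset.mem_filter.mp ht).2
        have : (t - c) * (t + c) = 0 := by linear_combination ht' - hc'
        rcases mul_eq_zero.mp this with h | h
        · simp [sub_eq_zero.mp h]
        · have : t = -c := eq_neg_of_add_eq_zero_left h
          simp [this]
      calc (Finset.univ.filter (fun t : F => t ^ 2 + 1 = 0)).card
          ≤ ({c, -c} : Finset F).card := Finset.card_le_card hsub
        _ ≤ 2 := Finset.card_insert_le _ _ |>.trans (by simp)
    · rw [Finset.not_nonempty_iff_eq_empty.mp hB]; simp
  -- rotations parametrized by `{t // t^2+1 ≠ 0} ⊕ Unit`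
  set D := ({t : F // t ^ 2 + 1 ≠ 0} ⊕ Unit) with hD
  set rot : D → F × F := Sum.elim
      (fun t => ((1 - t.1 ^ 2) / (1 + t.1 ^ 2), 2 * t.1 / (1 + t.1 ^ 2)))
      (fun _ => (-1, 0)) with hrot
  have hdenom : ∀ t : {t : F // t ^ 2 + 1 ≠ 0}, (1 + t.1 ^ 2) ≠ 0 := by
    intro t
    intro h
    exact t.2 (by linear_combination h)
  have hnorm : ∀ d : D, (rot d).1 ^ 2 + (rot d).2 ^ 2 = 1 := by
    rintro (t | u)
    · have := hdenom t
      simp only [hrot, Sum.elim_inl]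
      field_simp
      ring
    · simp [hrot]
  have hinl1 : ∀ t : {t : F // t ^ 2 + 1 ≠ 0}, 1 + (rot (Sum.inl t)).1 ≠ 0 := by
    intro t h
    have hd := hdenom t
    simp only [hrot, Sum.elim_inl] at h
    have : (1 + t.1 ^ 2) + (1 - t.1 ^ 2) = 0 := by
      field_simp at h
      linear_combination h
    exact h2 (by linear_combination this)
  have hinlt : ∀ t : {t : F // t ^ 2 + 1 ≠ 0},
      (rot (Sum.inl t)).2 / (1 + (rot (Sum.inl t)).1) = t.1 := by
    intro t
    have hd := hdenom t
    have h1 := hinl1 t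
    simp only [hrot, Sum.elim_inl] at h1 ⊢
    field_simp
    field_simp at h1
    rw [div_eq_iff (by intro h; apply h1; rw [h, zero_div])]
    ring
  have hrotinj : Function.Injective rot := by
    rintro (t | u) (s | v) h
    · have := hinlt t
      rw [h, hinlt s] at this
      exact congrArg Sum.inl (Subtype.ext this.symm)
    · exfalso
      apply hinl1 t
      rw [h]
      simp [hrot]
    · exfalso
      apply hinl1 s
      rw [← h]
      simp [hrot]
    · simp
  -- cardinality of D
  have hDcard : q - 1 ≤ Nat.card D := by
    have hcards : Nat.card D = Nat.card {t : F // t ^ 2 + 1 ≠ 0} + 1 := by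
      rw [hD, Nat.card_sum]
      simp
    have hsub : Nat.card {t : F // t ^ 2 + 1 ≠ 0}
        = (Finset.univ.filter (fun t : F => ¬ (t ^ 2 + 1 = 0))).card := by
      rw [Nat.card_eq_fintype_card, Fintype.card_subtype]
    have hsplit := Finset.card_filter_add_card_filter_not
      (s := (Finset.univ : Finset F)) (fun t : F => t ^ 2 + 1 = 0)
    rw [Finset.card_univ, hcard] at hsplit
    omega
  -- Part 1
  have part1 : ∀ x : Fin (k + 1) → Fin 2 → F, (∀ i, x i ∈ E) →
      q - 1 ≤ Nat.card {y : Fin (k + 1) → Fin 2 → F // (∀ i, y i ∈ E) ∧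
        ∀ i j, y i 0 * y j 1 - y i 1 * y j 0 = x i 0 * x j 1 - x i 1 * x j 0} := by
    intro x hx
    obtain ⟨i0, hi0⟩ := (hE (x 0)).mp (hx 0)
    have hS : x 0 0 ^ 2 + x 0 1 ^ 2 ≠ 0 := by rw [hi0]; exact hr0 i0
    set Φ : D → (Fin (k + 1) → Fin 2 → F) := fun d i =>
      ![(rot d).1 * x i 0 - (rot d).2 * x i 1,
        (rot d).2 * x i 0 + (rot d).1 * x i 1] with hΦ
    have hΦ0 : ∀ d i, Φ d i 0 = (rot d).1 * x i 0 - (rot d).2 * x i 1 := by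
      intro d i; simp [hΦ]
    have hΦ1 : ∀ d i, Φ d i 1 = (rot d).2 * x i 0 + (rot d).1 * x i 1 := by
      intro d i; simp [hΦ]
    have hmem : ∀ d i, Φ d i ∈ E := by
      intro d i
      obtain ⟨j, hj⟩ := (hE (x i)).mp (hx i)
      refine (hE _).mpr ⟨j, ?_⟩
      rw [hΦ0, hΦ1]
      linear_combination (x i 0 ^ 2 + x i 1 ^ 2) * hnorm d + hj
    have hwedge : ∀ d i j, Φ d i 0 * Φ d j 1 - Φ d i 1 * Φ d j 0
        = x i 0 * x j 1 - x i 1 * x j 0 := by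
      intro d i j
      rw [hΦ0, hΦ1, hΦ0, hΦ1]
      linear_combination (x i 0 * x j 1 - x i 1 * x j 0) * hnorm d
    set Ψ : D → {y : Fin (k + 1) → Fin 2 → F // (∀ i, y i ∈ E) ∧
        ∀ i j, y i 0 * y j 1 - y i 1 * y j 0 = x i 0 * x j 1 - x i 1 * x j 0} :=
      fun d => ⟨Φ d, fun i => hmem d i, fun i j => hwedge d i j⟩ with hΨ
    have hΨinj : Function.Injective Ψ := by
      intro d d' h
      have hfe : Φ d = Φ d' := congrArg Subtype.val h
      apply hrotinj
      have e0 : Φ d 0 0 = Φ d' 0 0 := by rw [hfe]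
      have e1 : Φ d 0 1 = Φ d' 0 1 := by rw [hfe]
      rw [hΦ0, hΦ0] at e0
      rw [hΦ1, hΦ1] at e1
      have ha : ((rot d).1 - (rot d').1) * (x 0 0 ^ 2 + x 0 1 ^ 2) = 0 := by
        linear_combination x 0 0 * e0 + x 0 1 * e1
      have hb : ((rot d).2 - (rot d').2) * (x 0 0 ^ 2 + x 0 1 ^ 2) = 0 := by
        linear_combination x 0 0 * e1 - x 0 1 * e0
      have ha' : (rot d).1 = (rot d').1 :=
        sub_eq_zero.mp ((mul_eq_zero.mp ha).resolve_right hS)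
      have hb' : (rot d).2 = (rot d').2 :=
        sub_eq_zero.mp ((mul_eq_zero.mp hb).resolve_right hS)
      exact Prod.ext ha' hb'
    calc q - 1 ≤ Nat.card D := hDcard
      _ ≤ _ := Nat.card_le_card_of_injective Ψ hΨinj
  refine ⟨part1, ?_⟩
  -- Part 2
  set W : (Fin (k + 1) → Fin 2 → F) → (Fin (k + 1) → Fin (k + 1) → F) :=
    fun x i j => x i 0 * x j 1 - x i 1 * x j 0 with hW
  set T : Finset (Fin (k + 1) → Fin 2 → F) := Fintype.piFinset (fun _ => E) with hT
  have hTcard : T.card = E.card ^ (k + 1) := by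
    rw [hT, Fintype.card_piFinset]
    simp
  have hNat : Nat.card {f : Fin (k + 1) → Fin (k + 1) → F //
      ∃ x : Fin (k + 1) → Fin 2 → F, (∀ i, x i ∈ E) ∧
        ∀ i j, x i 0 * x j 1 - x i 1 * x j 0 = f i j} = (T.image W).card := by
    rw [Nat.card_eq_fintype_card, Fintype.card_subtype]
    congr 1
    ext f
    simp only [Finset.mem_filter, Finset.mem_univ, true_and, Finset.mem_image, hT,
      Fintype.mem_piFinset]
    constructor
    · rintro ⟨x, hx, hfe⟩
      exact ⟨x, hx, by funext i j; exact hfe i j⟩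
    · rintro ⟨x, hx, rfl⟩
      exact ⟨x, hx, fun i j => rfl⟩
  rw [hNat]
  have hsum := Finset.card_eq_sum_card_image W T
  have hbound : ∀ f ∈ T.image W, q - 1 ≤ (T.filter fun x => W x = f).card := by
    intro f hf
    obtain ⟨x, hxT, rfl⟩ := Finset.mem_image.mp hf
    have hx : ∀ i, x i ∈ E := by
      rw [hT, Fintype.mem_piFinset] at hxT
      exact hxT
    have h1 := part1 x hx
    have heq : Nat.card {y : Fin (k + 1) → Fin 2 → F // (∀ i, y i ∈ E) ∧
        ∀ i j, y i 0 * y j 1 - y i 1 * y j 0 = x i 0 * x j 1 - x i 1 * x j 0}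
        = (T.filter fun z => W z = W x).card := by
      rw [Nat.card_eq_fintype_card, Fintype.card_subtype]
      congr 1
      ext z
      simp only [Finset.mem_filter, Finset.mem_univ, true_and, hT, Fintype.mem_piFinset]
      constructor
      · rintro ⟨hz, he⟩
        exact ⟨hz, by funext i j; exact he i j⟩
      · rintro ⟨hz, he⟩
        exact ⟨hz, fun i j => congrFun (congrFun he i) j⟩
    exact le_of_le_of_eq h1 heq
  calc (T.image W).card * (q - 1) = ∑ _f ∈ T.image W, (q - 1) := by
        simp [Finset.sum_const, mul_comm]
    _ ≤ ∑ f ∈ T.image W, (T.filter fun x => W x = f).card := Finset.sum_le_sum hbound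
    _ = T.card := hsum.symm
    _ = E.card ^ (k + 1) := hTcard
end

section
/- Let p be an odd prime, ℓ ≥ 1, and E = {(t + pn, t + pm) : 0 ≤ t < p, 0 ≤ n, m < p^{ℓ−1}} ⊆ (Z/p^ℓZ)^2. Then |E| = p^{2ℓ−1}, and for all x, y ∈ E, the quantity x·y^⊥ = x_1 y_2 − x_2 y_1 is divisible by p (i.e., is a non-unit in Z/p^ℓZ). -/
/-!
Writing `x = (t + p n, t + p m)`, the map `(t, n, m) ↦ x` is injective because `t + p n` is the
base-`p` expansion of a residue below `p^ℓ`, which gives the count `p · p^(ℓ-1) · p^(ℓ-1)`.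
Modulo `p` every point of `E` lies on the diagonal `(t, t)`, and any two diagonal vectors are
parallel, so their cross product vanishes modulo `p`.
-/

open Function

namespace ZMod

theorem natCast_injective_of_le {m N : ℕ} (h : m ≤ N) :
    Injective (fun i : Fin m => ((i : ℕ) : ZMod N)) := fun i j hij => by
  have := congrArg ZMod.val hij
  simp only [val_cast_of_lt (i.2.trans_le h), val_cast_of_lt (j.2.trans_le h)] at this
  exact Fin.ext this

theorem natCast_add_mul_injective {p q N : ℕ} (h : q * p ≤ N) :
    Injective (fun a : Fin q × Fin p => (((a.2 : ℕ) + p * a.1 : ℕ) : ZMod N)) :=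
  (natCast_injective_of_le h).comp finProdFinEquiv.injective

end ZMod

def diagonalShift (N p q : ℕ) (a : Fin p × Fin q × Fin q) : Fin 2 → ZMod N :=
  ![((a.1 : ℕ) : ZMod N) + p * (a.2.1 : ℕ), ((a.1 : ℕ) : ZMod N) + p * (a.2.2 : ℕ)]

theorem diagonalShift_injective {N p q : ℕ} (h : q * p ≤ N) :
    Injective (diagonalShift N p q) := by
  rintro ⟨t, n, m⟩ ⟨t', n', m'⟩ hxy
  have h0 := congrFun hxy 0
  have h1 := congrFun hxy 1
  simp only [diagonalShift, Matrix.cons_val_zero, Matrix.cons_val_one] at h0 h1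
  obtain ⟨rfl, rfl⟩ := Prod.ext_iff.mp <| ZMod.natCast_add_mul_injective (p := p) h
    (a₁ := (n, t)) (a₂ := (n', t')) (by push_cast; exact h0)
  obtain ⟨rfl, -⟩ := Prod.ext_iff.mp <| ZMod.natCast_add_mul_injective (p := p) h
    (a₁ := (m, t)) (a₂ := (m', t)) (by push_cast; exact h1)
  rfl

theorem range_diagonalShift (N p q : ℕ) :
    Set.range (diagonalShift N p q) = {v | ∃ t n m : ℕ, t < p ∧ n < q ∧ m < q ∧
      v 0 = (t : ZMod N) + p * n ∧ v 1 = (t : ZMod N) + p * m} := by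
  ext v
  constructor
  · rintro ⟨⟨t, n, m⟩, rfl⟩
    exact ⟨t, n, m, t.2, n.2, m.2, rfl, rfl⟩
  · rintro ⟨t, n, m, ht, hn, hm, h0, h1⟩
    refine ⟨(⟨t, ht⟩, ⟨n, hn⟩, ⟨m, hm⟩), funext fun i => ?_⟩
    fin_cases i <;> simp [diagonalShift, h0, h1]

theorem dvd_cross_of_diagonal {R : Type*} [CommRing R] (p t s a b c d : R) :
    p ∣ (t + p * a) * (s + p * d) - (t + p * b) * (s + p * c) :=
  ⟨t * d + a * s + p * a * d - t * c - b * s - p * b * c, by ring⟩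

theorem sharpness_example_zmod_general (p ℓ : ℕ) (hℓ : 1 ≤ ℓ)
    (E : Set (Fin 2 → ZMod (p ^ ℓ)))
    (hE : E = {v | ∃ t n m : ℕ, t < p ∧ n < p ^ (ℓ - 1) ∧ m < p ^ (ℓ - 1) ∧
      v 0 = (t : ZMod (p ^ ℓ)) + p * n ∧ v 1 = (t : ZMod (p ^ ℓ)) + p * m}) :
    Nat.card E = p ^ (2 * ℓ - 1) ∧
      ∀ x ∈ E, ∀ y ∈ E, (p : ZMod (p ^ ℓ)) ∣ (x 0 * y 1 - x 1 * y 0) := by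
  obtain ⟨k, rfl⟩ : ∃ k, ℓ = k + 1 := ⟨ℓ - 1, by omega⟩
  rw [Nat.add_sub_cancel, ← range_diagonalShift] at hE
  subst hE
  refine ⟨?_, ?_⟩
  · rw [Nat.card_range_of_injective (diagonalShift_injective (N := p ^ (k + 1)) (q := p ^ k) (pow_succ p k).ge)]
    simp only [Nat.card_eq_fintype_card, Fintype.card_prod, Fintype.card_fin]
    rw [show 2 * (k + 1) - 1 = 1 + k + k by omega, pow_add, pow_add, mul_assoc, pow_one]
  · rintro _ ⟨⟨t, n, m⟩, rfl⟩ _ ⟨⟨s, c, d⟩, rfl⟩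
    exact dvd_cross_of_diagonal _ _ _ _ _ _ _

/-- Sharpness example over `ℤ/p^ℓℤ`: the set
`E = {(t + pn, t + pm) : 0 ≤ t < p, 0 ≤ n, m < p^{ℓ-1}}` has `|E| = p^{2ℓ-1}` and every
`x · y^⊥ = x₁y₂ - x₂y₁` with `x, y ∈ E` is divisible by `p` (hence a non-unit). -/
theorem sharpness_example_zmod (p ℓ : ℕ) (hp : p.Prime) (hodd : Odd p) (hℓ : 1 ≤ ℓ)
    (E : Set (Fin 2 → ZMod (p ^ ℓ)))
    (hE : E = {v | ∃ t n m : ℕ, t < p ∧ n < p ^ (ℓ - 1) ∧ m < p ^ (ℓ - 1) ∧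
      v 0 = (t : ZMod (p ^ ℓ)) + p * n ∧ v 1 = (t : ZMod (p ^ ℓ)) + p * m}) :
    Nat.card E = p ^ (2 * ℓ - 1) ∧
      ∀ x ∈ E, ∀ y ∈ E, (p : ZMod (p ^ ℓ)) ∣ (x 0 * y 1 - x 1 * y 0) :=
  sharpness_example_zmod_general p ℓ hℓ E hE
end
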